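/- arXiv:1603.01687 — 2 statements merged into one kernel-verified Lean document; each statement's English description precedes it below -/
import Mathlib

section
/- Let G be connected with at least 2 vertices. Then there exists a Cheeger cut (A, Aᶜ) such that both the induced subgraph on A and the induced subgraph on Aᶜ are connected. -/
open Finset

/-- The degree of vertex `i`, as a real number. -/
noncomputable def dd {n : ℕ} (G : SimpleGraph (Fin n)) [DecidableRel G.Adj] (i : Fin n) : ℝ :=
  (G.degree i : ℝ)

/-- `vol(A) = Σ_{i∈A} d_i`. -/
noncomputable def volA {n : ℕ} (G : SimpleGraph (Fin n)) [DecidableRel G.Adj]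
    (A : Finset (Fin n)) : ℝ :=
  ∑ i ∈ A, dd G i

/-- `|∂A|`: the number of edges with one endpoint in `A` and the other in `Aᶜ`
(counted as ordered pairs `(i, j)` with `i ∈ A`, `j ∉ A`, `i ∼ j`). -/
def bdryCard {n : ℕ} (G : SimpleGraph (Fin n)) [DecidableRel G.Adj]
    (A : Finset (Fin n)) : ℕ :=
  (Finset.univ.filter (fun p : Fin n × Fin n => p.1 ∈ A ∧ p.2 ∉ A ∧ G.Adj p.1 p.2)).card

/-- The cut ratio `|∂S| / min(vol(S), vol(Sᶜ))`. -/
noncomputable def cutRatio {n : ℕ} (G : SimpleGraph (Fin n)) [DecidableRel G.Adj]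
    (S : Finset (Fin n)) : ℝ :=
  (bdryCard G S : ℝ) / min (volA G S) (volA G Sᶜ)

/-- The Cheeger constant `h(G)`: the minimum of the cut ratio over nonempty proper subsets. -/
noncomputable def cheegerConst {n : ℕ} (G : SimpleGraph (Fin n)) [DecidableRel G.Adj] : ℝ :=
  sInf {r : ℝ | ∃ S : Finset (Fin n), S.Nonempty ∧ S ≠ Finset.univ ∧ r = cutRatio G S}

/-- `(A, Aᶜ)` is a Cheeger cut: `A` is nonempty and proper and its cut ratio equals `h(G)`. -/
def IsCheegerCut {n : ℕ} (G : SimpleGraph (Fin n)) [DecidableRel G.Adj]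
    (A : Finset (Fin n)) : Prop :=
  A.Nonempty ∧ A ≠ Finset.univ ∧ cutRatio G A = cheegerConst G

/-- The subgraph of `G` induced on `A` is connected. -/
def IndConnected {n : ℕ} (G : SimpleGraph (Fin n)) (A : Finset (Fin n)) : Prop :=
  (G.induce (A : Set (Fin n))).Connected

/-!
Splitting `A` into a connected component `C` of `G[A]` and the rest `A \ C` splits both `vol`
and `|∂|` additively, so by the mediant inequality one of the two pieces has `|∂| / vol` at most
that of `A`; iterating, some component of `G[A]` does. Such a component has cut ratio at most that
of `A`, since `|∂C| ≤ |∂A|` and `vol Cᶜ ≥ vol Aᶜ`. Applied to a Cheeger cut `A` this yields a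
connected Cheeger cut `B`, and applied to `Bᶜ` a connected Cheeger cut `C ⊆ Bᶜ`. Finally `Cᶜ` is
`B` together with the other components of `G[Bᶜ]`, each of which is joined to the connected set
`B` because `G` is connected.
-/

namespace SimpleGraph

variable {V : Type*} (G : SimpleGraph V)

def IsUnionOfComponents (C A : Finset V) : Prop :=
  C ⊆ A ∧ ∀ ⦃u w⦄, u ∈ C → w ∈ A → G.Adj u w → w ∈ C

variable {G}

namespace IsUnionOfComponents

theorem refl (A : Finset V) : G.IsUnionOfComponents A A :=
  ⟨subset_rfl, fun _ _ _ hw _ => hw⟩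

theorem trans {B C A : Finset V} (hBC : G.IsUnionOfComponents B C)
    (hCA : G.IsUnionOfComponents C A) : G.IsUnionOfComponents B A :=
  ⟨hBC.1.trans hCA.1, fun _ _ hu hw huw => hBC.2 hu (hCA.2 (hBC.1 hu) hw huw) huw⟩

theorem sdiff [DecidableEq V] {C A : Finset V} (hC : G.IsUnionOfComponents C A) :
    G.IsUnionOfComponents (A \ C) A := by
  refine ⟨sdiff_subset, fun u w hu hw huw => mem_sdiff.mpr ⟨hw, fun hwC => ?_⟩⟩
  exact (mem_sdiff.mp hu).2 (hC.2 hwC (mem_sdiff.mp hu).1 huw.symm)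

end IsUnionOfComponents

theorem Preconnected.mem_of_isUnionOfComponents_univ [Fintype V] (hG : G.Preconnected)
    {E : Finset V} (hE : G.IsUnionOfComponents E univ) {u : V} (hu : u ∈ E) (v : V) :
    v ∈ E := by
  by_contra hv
  obtain ⟨d, -, hd, hd'⟩ := (hG u v).some.exists_boundary_dart (E : Set V) hu hv
  exact hd' (hE.2 hd (mem_univ _) d.adj)

theorem connected_induce_singleton (v : V) : (G.induce ({v} : Set V)).Connected := by
  rw [induce_singleton_eq_top]
  exact connected_top

theorem exists_connected_isUnionOfComponents_superset [Finite V] [DecidableEq V]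
    {S A : Finset V} (hSA : S ⊆ A) (hS : (G.induce (S : Set V)).Connected) :
    ∃ C, S ⊆ C ∧ G.IsUnionOfComponents C A ∧ (G.induce (C : Set V)).Connected := by
  obtain ⟨C, hSC, ⟨hCA, hC⟩, hmax⟩ := Finite.exists_le_maximal
    (p := fun T : Finset V => T ⊆ A ∧ (G.induce (T : Set V)).Connected) ⟨hSA, hS⟩
  refine ⟨C, hSC, ⟨hCA, fun u w hu hw huw => ?_⟩, hC⟩
  have hinsert : (G.induce ((insert w C : Finset V) : Set V)).Connected := by
    rw [coe_insert, Set.insert_eq, Set.union_comm]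
    exact G.connected_induce_union hC.preconnected (G.connected_induce_singleton w).preconnected
      hu rfl huw
  exact hmax ⟨insert_subset hw hCA, hinsert⟩ (subset_insert w C) (mem_insert_self w C)

theorem Preconnected.connected_induce_compl [Fintype V] [DecidableEq V] (hG : G.Preconnected)
    {B C : Finset V} (hB : (G.induce (B : Set V)).Connected) (hC : G.IsUnionOfComponents C Bᶜ) :
    (G.induce ((Cᶜ : Finset V) : Set V)).Connected := by
  have hBC : B ⊆ Cᶜ := subset_compl_comm.mp hC.1
  obtain ⟨D, hBD, hD, hDconn⟩ := G.exists_connected_isUnionOfComponents_superset hBC hB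
  suffices D = Cᶜ by rwa [← this]
  refine hD.1.antisymm fun x hxC => ?_
  by_contra hxD
  have hE : G.IsUnionOfComponents (Cᶜ \ D) univ := by
    refine ⟨subset_univ _, fun u w hu hw huw => ?_⟩
    obtain ⟨huC, huD⟩ := mem_sdiff.mp hu
    have hwC : w ∈ Cᶜ := mem_compl.mpr fun hwC =>
      mem_compl.mp huC (hC.2 hwC (mem_compl.mpr fun huB => huD (hBD huB)) huw.symm)
    exact mem_sdiff.mpr ⟨hwC, fun hwD => huD (hD.2 hwD huC huw.symm)⟩
  obtain ⟨b, hb⟩ := hB.nonempty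
  exact (mem_sdiff.mp (hG.mem_of_isUnionOfComponents_univ hE (mem_sdiff.mpr ⟨hxC, hxD⟩) b)).2
    (hBD hb)

end SimpleGraph

theorem Finset.nonempty_compl {α : Type*} [Fintype α] [DecidableEq α] {s : Finset α} :
    sᶜ.Nonempty ↔ s ≠ univ :=
  nonempty_iff_ne_empty.trans (compl_eq_empty_iff s).not

theorem div_le_add_div_add_or {K : Type*} [Field K] [LinearOrder K] [IsStrictOrderedRing K]
    {a b c d : K} (hb : 0 < b) (hd : 0 < d) :
    a / b ≤ (a + c) / (b + d) ∨ c / d ≤ (a + c) / (b + d) := by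
  by_contra! h
  rw [div_lt_div_iff₀ (by positivity) hb, div_lt_div_iff₀ (by positivity) hd] at h
  nlinarith [h.1, h.2]

section Cheeger

variable {n : ℕ} (G : SimpleGraph (Fin n)) [DecidableRel G.Adj]

theorem volA_mono {A B : Finset (Fin n)} (h : A ⊆ B) : volA G A ≤ volA G B :=
  sum_le_sum_of_subset_of_nonneg h fun i _ _ => Nat.cast_nonneg (G.degree i)

theorem volA_pos (hdeg : ∀ i, 0 < G.degree i) {A : Finset (Fin n)} (hA : A.Nonempty) :
    0 < volA G A :=
  sum_pos (fun i _ => Nat.cast_pos.mpr (hdeg i)) hA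

theorem volA_add_volA_sdiff {C A : Finset (Fin n)} (h : C ⊆ A) :
    volA G C + volA G (A \ C) = volA G A := by
  rw [add_comm]
  exact sum_sdiff h

theorem bdryCard_compl (A : Finset (Fin n)) : bdryCard G Aᶜ = bdryCard G A := by
  refine card_bij (fun p _ => p.swap) ?_ (fun p _ q _ h => Prod.swap_injective h) ?_
  · rintro ⟨a, b⟩ hp
    simp only [mem_filter, mem_univ, true_and, mem_compl, not_not] at hp ⊢
    exact ⟨hp.2.1, hp.1, hp.2.2.symm⟩
  · rintro ⟨a, b⟩ hp
    refine ⟨(b, a), ?_, rfl⟩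
    simp only [mem_filter, mem_univ, true_and, mem_compl, not_not] at hp ⊢
    exact ⟨hp.2.1, hp.1, hp.2.2.symm⟩

theorem bdryCard_add_bdryCard_sdiff {C A : Finset (Fin n)} (hC : G.IsUnionOfComponents C A) :
    bdryCard G C + bdryCard G (A \ C) = bdryCard G A := by
  rw [bdryCard, bdryCard, bdryCard, ← card_union_of_disjoint]
  · congr 1
    ext ⟨a, b⟩
    simp only [mem_filter, mem_univ, true_and, mem_union, mem_sdiff]
    constructor
    · rintro (⟨haC, hbC, hab⟩ | ⟨⟨haA, haC⟩, hbAC, hab⟩)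
      · exact ⟨hC.1 haC, fun hbA => hbC (hC.2 haC hbA hab), hab⟩
      · exact ⟨haA, fun hbA => hbAC ⟨hbA, fun hbC => haC (hC.2 hbC haA hab.symm)⟩, hab⟩
    · rintro ⟨haA, hbA, hab⟩
      by_cases haC : a ∈ C
      · exact Or.inl ⟨haC, fun hbC => hbA (hC.1 hbC), hab⟩
      · exact Or.inr ⟨⟨haA, haC⟩, fun hb => hbA hb.1, hab⟩
  · refine disjoint_left.mpr fun p hp hp' => ?_
    exact (mem_sdiff.mp (mem_filter.mp hp').2.1).2 (mem_filter.mp hp).2.1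

theorem cutRatio_compl (A : Finset (Fin n)) : cutRatio G Aᶜ = cutRatio G A := by
  rw [cutRatio, cutRatio, bdryCard_compl, compl_compl, min_comm]

theorem exists_connected_isUnionOfComponents_div_le (hdeg : ∀ i, 0 < G.degree i)
    {A : Finset (Fin n)} (hA : A.Nonempty) :
    ∃ B, G.IsUnionOfComponents B A ∧ B.Nonempty ∧ IndConnected G B ∧
      (bdryCard G B : ℝ) / volA G B ≤ bdryCard G A / volA G A := by
  induction A using Finset.strongInduction with
  | H A ih =>
  by_cases hconn : IndConnected G A
  · exact ⟨A, .refl A, hA, hconn, le_rfl⟩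
  obtain ⟨v, hv⟩ := hA
  obtain ⟨C, hvC, hC, hCconn⟩ := G.exists_connected_isUnionOfComponents_superset
    (singleton_subset_iff.mpr hv) (by rw [coe_singleton]; exact G.connected_induce_singleton v)
  have hCne : C.Nonempty := ⟨v, singleton_subset_iff.mp hvC⟩
  have hCA : C ⊂ A := ssubset_of_subset_of_ne hC.1 (by rintro rfl; exact hconn hCconn)
  have hD : (A \ C).Nonempty := sdiff_nonempty.mpr hCA.not_subset
  have hsplit := div_le_add_div_add_or (a := (bdryCard G C : ℝ)) (c := bdryCard G (A \ C))
    (volA_pos G hdeg hCne) (volA_pos G hdeg hD)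
  rw [← Nat.cast_add, bdryCard_add_bdryCard_sdiff G hC, volA_add_volA_sdiff G hC.1] at hsplit
  rcases hsplit with hCle | hDle
  · obtain ⟨B, hB, hBne, hBconn, hBle⟩ := ih C hCA hCne
    exact ⟨B, hB.trans hC, hBne, hBconn, hBle.trans hCle⟩
  · obtain ⟨B, hB, hBne, hBconn, hBle⟩ := ih (A \ C) (sdiff_ssubset hC.1 hCne) hD
    exact ⟨B, hB.trans hC.sdiff, hBne, hBconn, hBle.trans hDle⟩

theorem cutRatio_le_of_isUnionOfComponents (hdeg : ∀ i, 0 < G.degree i)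
    {C A : Finset (Fin n)} (hC : G.IsUnionOfComponents C A) (hCne : C.Nonempty)
    (hAc : Aᶜ.Nonempty) (hle : (bdryCard G C : ℝ) / volA G C ≤ bdryCard G A / volA G A) :
    cutRatio G C ≤ cutRatio G A := by
  have hvAc : 0 < volA G Aᶜ := volA_pos G hdeg hAc
  have hmin : 0 < min (volA G A) (volA G Aᶜ) :=
    lt_min (volA_pos G hdeg (hCne.mono hC.1)) hvAc
  have hbA : (0 : ℝ) ≤ bdryCard G A := Nat.cast_nonneg _
  have hbCA : (bdryCard G C : ℝ) ≤ bdryCard G A := by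
    exact_mod_cast (bdryCard_add_bdryCard_sdiff G hC).le.trans' (Nat.le_add_right _ _)
  have hvCA : volA G Aᶜ ≤ volA G Cᶜ := volA_mono G (compl_subset_compl.mpr hC.1)
  rw [cutRatio, cutRatio]
  rcases le_total (volA G C) (volA G Cᶜ) with hCCc | hCcC
  · rw [min_eq_left hCCc]
    exact hle.trans (div_le_div_of_nonneg_left hbA hmin (min_le_left _ _))
  · rw [min_eq_right hCcC]
    calc (bdryCard G C : ℝ) / volA G Cᶜ ≤ bdryCard G A / volA G Cᶜ :=
          div_le_div_of_nonneg_right hbCA (hvAc.le.trans hvCA)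
      _ ≤ bdryCard G A / volA G Aᶜ := div_le_div_of_nonneg_left hbA hvAc hvCA
      _ ≤ bdryCard G A / min (volA G A) (volA G Aᶜ) :=
        div_le_div_of_nonneg_left hbA hmin (min_le_right _ _)

theorem cutRatios_finite :
    {r : ℝ | ∃ S : Finset (Fin n), S.Nonempty ∧ S ≠ univ ∧ r = cutRatio G S}.Finite :=
  (Set.finite_range (cutRatio G)).subset fun _ ⟨S, _, _, hr⟩ => ⟨S, hr.symm⟩

theorem cheegerConst_le_cutRatio {S : Finset (Fin n)} (hS : S.Nonempty) (hSu : S ≠ univ) :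
    cheegerConst G ≤ cutRatio G S :=
  csInf_le (cutRatios_finite G).bddBelow ⟨S, hS, hSu, rfl⟩

theorem exists_isCheegerCut [Nontrivial (Fin n)] : ∃ A, IsCheegerCut G A := by
  obtain ⟨v⟩ : Nonempty (Fin n) := inferInstance
  obtain ⟨S, hS, hSu, hSr⟩ := Set.Nonempty.csInf_mem
    (by exact ⟨_, {v}, singleton_nonempty v, singleton_ne_univ v, rfl⟩) (cutRatios_finite G)
  exact ⟨S, hS, hSu, hSr.symm⟩

theorem isCheegerCut_of_cutRatio_le {S : Finset (Fin n)} (hS : S.Nonempty) (hSu : S ≠ univ)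
    (hle : cutRatio G S ≤ cheegerConst G) : IsCheegerCut G S :=
  ⟨hS, hSu, hle.antisymm (cheegerConst_le_cutRatio G hS hSu)⟩

end Cheeger

/-- For connected `G` with at least two vertices, there exists a Cheeger cut `(A, Aᶜ)` such
that both induced subgraphs on `A` and on `Aᶜ` are connected. -/
theorem stmt14 {n : ℕ} (G : SimpleGraph (Fin n)) [DecidableRel G.Adj]
    (hn : 2 ≤ n) (hG : G.Connected) :
    ∃ A : Finset (Fin n), IsCheegerCut G A ∧ IndConnected G A ∧ IndConnected G Aᶜ := by
  have : Nontrivial (Fin n) := Fin.nontrivial_iff_two_le.mpr hn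
  have hdeg : ∀ i, 0 < G.degree i := fun i => hG.preconnected.degree_pos_of_nontrivial i
  obtain ⟨A, hA, hAu, hAh⟩ := exists_isCheegerCut G
  obtain ⟨B, hBA, hB, hBconn, hBle⟩ := exists_connected_isUnionOfComponents_div_le G hdeg hA
  have hBc : Bᶜ.Nonempty := (nonempty_compl.mpr hAu).mono (compl_subset_compl.mpr hBA.1)
  have hBh : cutRatio G B ≤ cheegerConst G :=
    (cutRatio_le_of_isUnionOfComponents G hdeg hBA hB (nonempty_compl.mpr hAu) hBle).trans hAh.le
  obtain ⟨C, hCB, hC, hCconn, hCle⟩ := exists_connected_isUnionOfComponents_div_le G hdeg hBc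
  have hCc : Cᶜ.Nonempty := hB.mono (subset_compl_comm.mp hCB.1)
  refine ⟨C, isCheegerCut_of_cutRatio_le G hC (nonempty_compl.mp hCc) ?_, hCconn,
    hG.preconnected.connected_induce_compl hBconn hCB⟩
  calc cutRatio G C ≤ cutRatio G Bᶜ := cutRatio_le_of_isUnionOfComponents G hdeg hCB hC
        (by rwa [compl_compl]) hCle
    _ = cutRatio G B := cutRatio_compl G B
    _ ≤ cheegerConst G := hBh
end

section
/- Let T be a compact subset of {x ∈ ℝⁿ \ {0} : Σ_{i: x_i>0} d_i ≤ δ/2 and Σ_{i: x_i<0} d_i ≤ δ/2} containing π. Let x⁰ ∈ π and define sequences by λᵏ = I(xᵏ)/‖xᵏ‖_{1,d} and xᵏ⁺¹ a minimizer over T of x ↦ I(x) − λᵏ‖x‖_{1,d}. Then the sequence (λᵏ) is nonincreasing and converges to min_{x∈π} I(x), the global minimum of I over π. -/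
open Finset

/-- The weighted 1-norm `‖x‖_{1,d} = Σ_i d_i |x_i|`. -/
noncomputable def norm1d {n : ℕ} (G : SimpleGraph (Fin n)) [DecidableRel G.Adj]
    (x : Fin n → ℝ) : ℝ :=
  ∑ i, dd G i * |x i|

/-- `δ₊(x) = Σ_{i : x_i > 0} d_i`. -/
noncomputable def deltaP {n : ℕ} (G : SimpleGraph (Fin n)) [DecidableRel G.Adj]
    (x : Fin n → ℝ) : ℝ :=
  ∑ i, if 0 < x i then dd G i else 0

/-- `δ₋(x) = Σ_{i : x_i < 0} d_i`. -/
noncomputable def deltaM {n : ℕ} (G : SimpleGraph (Fin n)) [DecidableRel G.Adj]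
    (x : Fin n → ℝ) : ℝ :=
  ∑ i, if x i < 0 then dd G i else 0

/-- `δ₀(x) = Σ_{i : x_i = 0} d_i`. -/
noncomputable def delta0 {n : ℕ} (G : SimpleGraph (Fin n)) [DecidableRel G.Adj]
    (x : Fin n → ℝ) : ℝ :=
  ∑ i, if x i = 0 then dd G i else 0

/-- `δ = Σ_i d_i`. -/
noncomputable def deltaTot {n : ℕ} (G : SimpleGraph (Fin n)) [DecidableRel G.Adj] : ℝ :=
  ∑ i, dd G i

/-- The set `X = {x : ‖x‖_{1,d} = 1}`. -/
def Xset {n : ℕ} (G : SimpleGraph (Fin n)) [DecidableRel G.Adj] : Set (Fin n → ℝ) :=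
  {x | norm1d G x = 1}

/-- The feasible set `π = {x ∈ X : |δ₊(x) − δ₋(x)| ≤ δ₀(x)}`. -/
def piSet {n : ℕ} (G : SimpleGraph (Fin n)) [DecidableRel G.Adj] : Set (Fin n → ℝ) :=
  {x | norm1d G x = 1 ∧ |deltaP G x - deltaM G x| ≤ delta0 G x}

/-- `I(x) = (1/2) Σ_{i,j} a_{ij} |x_i − x_j|`, with `a` the adjacency matrix. -/
noncomputable def Ifun {n : ℕ} (G : SimpleGraph (Fin n)) [DecidableRel G.Adj]
    (x : Fin n → ℝ) : ℝ :=
  (1 / 2) * ∑ i, ∑ j, (if G.Adj i j then (1 : ℝ) else 0) * |x i - x j|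

/-!
This is Dinkelbach's method for the fractional program `min_{x ∈ T} I(x) / ‖x‖_{1,d}`.
Testing the minimality of `xᵏ⁺¹` against `xᵏ` (where the objective vanishes) shows that `λ` is
nonincreasing; testing it against an arbitrary `y ∈ T` gives
`λᵏ ‖y‖ + (λᵏ⁺¹ - λᵏ) ‖xᵏ⁺¹‖ ≤ I(y)`, and since `‖·‖` is bounded on the compact set `T` the
limit of `λ` is at most `I(y) / ‖y‖`. Finally, `I` and `‖·‖_{1,d}` are positively homogeneous and
the median condition is scale invariant, so `x ↦ x / ‖x‖_{1,d}` maps `T` into `π`: the infimum of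
the ratio over `T` is the infimum of `I` over `π`.
-/

open Filter Topology

section Dinkelbach

variable {E : Type*} {f g : E → ℝ} {T : Set E} {x : ℕ → E} {lam : ℕ → ℝ}

theorem dinkelbach_antitone (hg : ∀ k, 0 < g (x k)) (hlam : ∀ k, lam k = f (x k) / g (x k))
    (hxT : ∀ k, x k ∈ T) (hmin : ∀ k, IsMinOn (fun y => f y - lam k * g y) T (x (k + 1))) :
    Antitone lam := by
  refine antitone_nat_of_succ_le fun k => ?_
  have hk : f (x k) - lam k * g (x k) = 0 := by
    rw [hlam k, div_mul_cancel₀ _ (hg k).ne', sub_self]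
  have hstep := isMinOn_iff.1 (hmin k) (x k) (hxT k)
  rw [hlam (k + 1), div_le_iff₀ (hg (k + 1))]
  linarith

theorem dinkelbach_tendsto (hg : ∀ y ∈ T, 0 < g y) (hgT : BddAbove (g '' T))
    (hratio : BddBelow ((fun y => f y / g y) '' T)) (hlam : ∀ k, lam k = f (x k) / g (x k))
    (hxT : ∀ k, x k ∈ T) (hmin : ∀ k, IsMinOn (fun y => f y - lam k * g y) T (x (k + 1))) :
    Tendsto lam atTop (𝓝 (sInf ((fun y => f y / g y) '' T))) := by
  set m := sInf ((fun y => f y / g y) '' T)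
  have hm : ∀ k, m ≤ lam k := fun k => (hlam k).symm ▸ csInf_le hratio ⟨x k, hxT k, rfl⟩
  have hanti := dinkelbach_antitone (fun k => hg _ (hxT k)) hlam hxT hmin
  have hL := tendsto_atTop_ciInf hanti ⟨m, Set.forall_mem_range.2 hm⟩
  suffices (⨅ k, lam k) = m from this ▸ hL
  refine le_antisymm (le_csInf ⟨_, x 0, hxT 0, rfl⟩ ?_) (le_ciInf hm)
  rintro _ ⟨y, hy, rfl⟩
  obtain ⟨C, hC⟩ := hgT
  -- `λᵏ⁺¹ ≤ λᵏ` and `g (xᵏ⁺¹) ≤ C` bound the error term below by a sequence tending to `0`.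
  have hbound : ∀ k, lam k * g y + (lam (k + 1) - lam k) * C ≤ f y := fun k => by
    have hstep := isMinOn_iff.1 (hmin k) y hy
    have hdrop := mul_le_mul_of_nonpos_left (hC ⟨_, hxT (k + 1), rfl⟩)
      (sub_nonpos.2 (hanti (k.le_add_right 1)))
    have hk : f (x (k + 1)) - lam k * g (x (k + 1)) = (lam (k + 1) - lam k) * g (x (k + 1)) := by
      rw [hlam (k + 1), sub_mul, div_mul_cancel₀ _ (hg _ (hxT (k + 1))).ne']
    linarith
  have hlim : Tendsto (fun k => lam k * g y + (lam (k + 1) - lam k) * C) atTop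
      (𝓝 ((⨅ k, lam k) * g y + ((⨅ k, lam k) - ⨅ k, lam k) * C)) :=
    (hL.mul_const _).add (((hL.comp (tendsto_add_atTop_nat 1)).sub hL).mul_const _)
  rw [sub_self, zero_mul, add_zero] at hlim
  exact (le_div_iff₀ (hg y hy)).2 (le_of_tendsto' hlim hbound)

end Dinkelbach

section Graph

variable {n : ℕ} (G : SimpleGraph (Fin n)) [DecidableRel G.Adj]

lemma norm1d_nonneg (x : Fin n → ℝ) : 0 ≤ norm1d G x :=
  sum_nonneg fun _ _ => mul_nonneg (Nat.cast_nonneg _) (abs_nonneg _)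

lemma Ifun_nonneg (x : Fin n → ℝ) : 0 ≤ Ifun G x :=
  mul_nonneg (by norm_num) <| sum_nonneg fun _ _ => sum_nonneg fun _ _ =>
    mul_nonneg (by split <;> norm_num) (abs_nonneg _)

lemma norm1d_pos (hd : ∀ i, 0 < dd G i) {x : Fin n → ℝ} (hx : x ≠ 0) : 0 < norm1d G x := by
  obtain ⟨i, hi⟩ := Function.ne_iff.1 hx
  exact sum_pos' (fun j _ => mul_nonneg (hd j).le (abs_nonneg _))
    ⟨i, mem_univ i, mul_pos (hd i) (abs_pos.2 hi)⟩

lemma continuous_norm1d : Continuous (norm1d G) :=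
  continuous_finsetSum _ fun i _ => continuous_const.mul (continuous_apply i).abs

lemma norm1d_smul_of_nonneg {c : ℝ} (hc : 0 ≤ c) (x : Fin n → ℝ) :
    norm1d G (c • x) = c * norm1d G x := by
  simp only [norm1d, mul_sum, Pi.smul_apply, smul_eq_mul, abs_mul, abs_of_nonneg hc]
  exact sum_congr rfl fun i _ => by ring

lemma Ifun_smul_of_nonneg {c : ℝ} (hc : 0 ≤ c) (x : Fin n → ℝ) :
    Ifun G (c • x) = c * Ifun G x := by
  simp only [Ifun, mul_sum, Pi.smul_apply, smul_eq_mul, ← mul_sub, abs_mul, abs_of_nonneg hc]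
  exact sum_congr rfl fun i _ => sum_congr rfl fun j _ => by ring

lemma deltaP_smul_of_pos {c : ℝ} (hc : 0 < c) (x : Fin n → ℝ) :
    deltaP G (c • x) = deltaP G x := by
  simp only [deltaP, Pi.smul_apply, smul_eq_mul, mul_pos_iff_of_pos_left hc]

lemma deltaM_smul_of_pos {c : ℝ} (hc : 0 < c) (x : Fin n → ℝ) :
    deltaM G (c • x) = deltaM G x := by
  simp only [deltaM, Pi.smul_apply, smul_eq_mul, ← neg_pos, ← mul_neg,
    mul_pos_iff_of_pos_left hc]

lemma delta0_smul_of_pos {c : ℝ} (hc : 0 < c) (x : Fin n → ℝ) :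
    delta0 G (c • x) = delta0 G x := by
  simp only [delta0, Pi.smul_apply, smul_eq_mul, mul_eq_zero, hc.ne', false_or]

lemma deltaP_add_deltaM_add_delta0 (x : Fin n → ℝ) :
    deltaP G x + deltaM G x + delta0 G x = deltaTot G := by
  simp only [deltaP, deltaM, delta0, deltaTot, ← sum_add_distrib]
  refine sum_congr rfl fun i _ => ?_
  rcases lt_trichotomy (x i) 0 with h | h | h
  · simp [h, h.ne, h.not_gt]
  · simp [h]
  · simp [h, h.ne', h.not_gt]

lemma inv_norm1d_smul_mem_piSet (hd : ∀ i, 0 < dd G i) {x : Fin n → ℝ} (hx : x ≠ 0)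
    (hP : deltaP G x ≤ deltaTot G / 2) (hM : deltaM G x ≤ deltaTot G / 2) :
    (norm1d G x)⁻¹ • x ∈ piSet G := by
  have hpos := norm1d_pos G hd hx
  have hc := inv_pos.2 hpos
  refine ⟨by rw [norm1d_smul_of_nonneg G hc.le, inv_mul_cancel₀ hpos.ne'], ?_⟩
  rw [deltaP_smul_of_pos G hc, deltaM_smul_of_pos G hc, delta0_smul_of_pos G hc, abs_le]
  have := deltaP_add_deltaM_add_delta0 G x
  constructor <;> linarith

lemma image_Ifun_div_norm1d_eq (hd : ∀ i, 0 < dd G i) {T : Set (Fin n → ℝ)}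
    (hπT : piSet G ⊆ T)
    (hT : T ⊆ {x | x ≠ 0 ∧ deltaP G x ≤ deltaTot G / 2 ∧ deltaM G x ≤ deltaTot G / 2}) :
    (fun y => Ifun G y / norm1d G y) '' T = Ifun G '' piSet G := by
  ext r
  constructor
  · rintro ⟨y, hy, rfl⟩
    obtain ⟨hy0, hP, hM⟩ := hT hy
    refine ⟨_, inv_norm1d_smul_mem_piSet G hd hy0 hP hM, ?_⟩
    rw [Ifun_smul_of_nonneg G (inv_nonneg.2 (norm1d_nonneg G y)), inv_mul_eq_div]
  · rintro ⟨y, hy, rfl⟩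
    exact ⟨y, hπT hy, by simp only [hy.1, div_one]⟩

end Graph

/-- Two-step iterative scheme: with `T` a compact subset of
`{x ≠ 0 : 0 is a median of x}` containing `π`, starting from `x⁰ ∈ π`, setting
`λᵏ = I(xᵏ)/‖xᵏ‖_{1,d}` and choosing `xᵏ⁺¹` minimizing `I(x) − λᵏ‖x‖_{1,d}` over `T`,
the sequence `(λᵏ)` is nonincreasing and converges to the global minimum of `I` over `π`. -/
theorem stmt17 {n : ℕ} (G : SimpleGraph (Fin n)) [DecidableRel G.Adj]
    (hd : ∀ i, 0 < dd G i) (T : Set (Fin n → ℝ)) (hTc : IsCompact T)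
    (hπT : piSet G ⊆ T)
    (hT : T ⊆ {x | x ≠ 0 ∧ deltaP G x ≤ deltaTot G / 2 ∧ deltaM G x ≤ deltaTot G / 2})
    (x : ℕ → Fin n → ℝ) (hx0 : x 0 ∈ piSet G)
    (lam : ℕ → ℝ) (hlam : ∀ k, lam k = Ifun G (x k) / norm1d G (x k))
    (hstep : ∀ k, x (k + 1) ∈ T ∧
      ∀ y ∈ T, Ifun G (x (k + 1)) - lam k * norm1d G (x (k + 1)) ≤
        Ifun G y - lam k * norm1d G y) :
    Antitone lam ∧
    Filter.Tendsto lam Filter.atTop (nhds (sInf (Ifun G '' piSet G))) := by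
  have hxT : ∀ k, x k ∈ T
    | 0 => hπT hx0
    | k + 1 => (hstep k).1
  have hmin : ∀ k, IsMinOn (fun y => Ifun G y - lam k * norm1d G y) T (x (k + 1)) :=
    fun k => isMinOn_iff.2 (hstep k).2
  have hpos : ∀ y ∈ T, 0 < norm1d G y := fun y hy => norm1d_pos G hd (hT hy).1
  have hratio : BddBelow ((fun y => Ifun G y / norm1d G y) '' T) :=
    ⟨0, by rintro _ ⟨y, -, rfl⟩; exact div_nonneg (Ifun_nonneg G y) (norm1d_nonneg G y)⟩
  refine ⟨dinkelbach_antitone (fun k => hpos _ (hxT k)) hlam hxT hmin, ?_⟩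
  rw [← image_Ifun_div_norm1d_eq G hd hπT hT]
  exact dinkelbach_tendsto hpos (hTc.bddAbove_image (continuous_norm1d G).continuousOn)
    hratio hlam hxT hmin
end
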